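/- Define the integer sequence h(n) by h(0)=1, h(1)=1, h(2)=2, h(3)=3, h(4)=3, h(5)=4, and h(n)=h(n−2)+h(n−3) for n ≥ 6. Define the (1,3,3)-Padovan sequence p by p(0)=1, p(1)=3, p(2)=3, p(n)=p(n−2)+p(n−3) for n ≥ 3. Then for all n ≥ 3, h(n) = p(n−2). -/

import Mathlib

def h : ℕ → ℤ
  | 0 => 1
  | 1 => 1
  | 2 => 2
  | 3 => 3
  | 4 => 3
  | 5 => 4
  | (n + 6) => h (n + 4) + h (n + 3)

def p : ℕ → ℤ
  | 0 => 1
  | 1 => 3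
  | 2 => 3
  | (n + 3) => p (n + 1) + p n

theorem eq_of_padovan_recurrence {R : Type*} [Add R] {a b : ℕ → R}
    (ha : ∀ n, a (n + 3) = a (n + 1) + a n) (hb : ∀ n, b (n + 3) = b (n + 1) + b n)
    (h0 : a 0 = b 0) (h1 : a 1 = b 1) (h2 : a 2 = b 2) : a = b := by
  funext n
  induction n using Nat.strong_induction_on with
  | _ n ih =>
    match n with
    | 0 => exact h0
    | 1 => exact h1
    | 2 => exact h2
    | n + 3 => rw [ha, hb, ih (n + 1) (by omega), ih n (by omega)]

theorem h_add_three_eq_p_add_one : (fun n => h (n + 3)) = fun n => p (n + 1) :=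
  eq_of_padovan_recurrence (fun _ => rfl) (fun _ => rfl) rfl rfl rfl

theorem h_eq_padovan (n : ℕ) (hn : 3 ≤ n) : h n = p (n - 2) := by
  obtain ⟨m, rfl⟩ := Nat.exists_eq_add_of_le' hn
  simpa using congrFun h_add_three_eq_p_add_one m
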